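/- In the setting of the cosmological model of Section 6, with coordinates (τ,v) and (τ,u) related by u = -v + 2∫₀^{t(τ)} 1/a(t') dt' where a(t) = t^p, 0 < p < 1: along any curve of constant v, the derivative ∂u/∂τ = 2/a(t(τ))² = 2·((p+1)τ)^{-2p/(p+1)} tends to +∞ as τ → 0⁺. Consequently the identification map (τ,v) ↦ (τ, -v + 2∫₀^{t(τ)} a(t')^{-1} dt'), defined for τ > 0, extends continuously but not as a C¹ map to τ = 0. -/

import Mathlib

/-!
Write `t(τ) = ((p+1)τ)^{1/(p+1)}`. On `τ > 0` the shift `2 t(τ)^{1-p}/(1-p)` equals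
`2((p+1)τ)^{(1-p)/(p+1)}/(1-p)`, whose derivative is `2((p+1)τ)^{-2p/(p+1)} = 2/a(t(τ))²`.
The exponent `(1-p)/(p+1)` is positive, so the shift itself tends to `0` as `τ → 0⁺`, while the
exponent `-2p/(p+1)` of its derivative is negative, so the derivative blows up. A `C¹` extension
to `[0, ∞)` would have a derivative with a finite one-sided limit at `0`, which is impossible.
-/

open Filter Set Real Topology

theorem not_contDiffOn_Ici_of_tendsto_deriv_atTop {F f' : ℝ → ℝ} {a : ℝ}
    (hF : ∀ τ, a < τ → HasDerivAt F (f' τ) τ) (hf' : Tendsto f' (𝓝[>] a) atTop) :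
    ¬ ContDiffOn ℝ 1 F (Ici a) := by
  intro hC
  have hlim : Tendsto (derivWithin F (Ici a)) (𝓝[>] a) (𝓝 (derivWithin F (Ici a) a)) :=
    ((hC.continuousOn_derivWithin (uniqueDiffOn_Ici a) le_rfl) a self_mem_Ici).tendsto.mono_left
      (nhdsWithin_mono a Ioi_subset_Ici_self)
  have hderiv : derivWithin F (Ici a) =ᶠ[𝓝[>] a] f' := by
    filter_upwards [self_mem_nhdsWithin] with τ (hτ : a < τ)
    rw [derivWithin_of_mem_nhds (mem_of_superset (Ioi_mem_nhds hτ) Ioi_subset_Ici_self)]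
    exact (hF τ hτ).deriv
  exact not_tendsto_atTop_of_tendsto_nhds hlim (hf'.congr' hderiv.symm)

theorem tendsto_const_mul_rpow_nhdsGT_zero_atTop {c r : ℝ} (hc : 0 < c) (hr : r < 0) :
    Tendsto (fun τ : ℝ => (c * τ) ^ r) (𝓝[>] 0) atTop :=
  (tendsto_rpow_neg_nhdsGT_zero hr).comp
    (tendsto_iff_comap.2 (comap_mulLeft_nhdsGT_zero hc).ge)

theorem hasDerivAt_identification_shift {p τ : ℝ} (hp : -1 < p) (hp1 : p ≠ 1) (hτ : 0 < τ) :
    HasDerivAt (fun σ : ℝ => 2 * ((((p+1) * σ) ^ (1/(p+1))) ^ (1 - p)) / (1 - p))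
      (2 * ((p+1) * τ) ^ (-(2*p/(p+1)))) τ := by
  have hc : 0 < p + 1 := by linarith
  have h1p : 1 - p ≠ 0 := sub_ne_zero.2 hp1.symm
  have hpow : HasDerivAt (fun σ : ℝ => ((p+1) * σ) ^ ((1 - p) / (p+1)))
      ((p+1) * ((1 - p) / (p+1)) * ((p+1) * τ) ^ ((1 - p) / (p+1) - 1)) τ := by
    simpa using ((hasDerivAt_id τ).const_mul (p+1)).rpow_const (Or.inl (mul_pos hc hτ).ne')
  have hexp : (1 - p) / (p+1) - 1 = -(2*p/(p+1)) := by field_simp; ring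
  have hval : 2 * ((p+1) * ((1 - p) / (p+1)) * ((p+1) * τ) ^ ((1 - p) / (p+1) - 1)) / (1 - p)
      = 2 * ((p+1) * τ) ^ (-(2*p/(p+1))) := by
    rw [hexp]; field_simp
  refine (hval ▸ (hpow.const_mul 2).div_const (1 - p)).congr_of_eventuallyEq ?_
  filter_upwards [Ioi_mem_nhds hτ] with σ (hσ : 0 < σ)
  rw [← rpow_mul (mul_pos hc hσ).le, one_div_mul_eq_div]

theorem tendsto_identification_shift_nhdsGT_zero {p : ℝ} (hp : -1 < p) (hp1 : p < 1) :
    Tendsto (fun τ : ℝ => 2 * ((((p+1) * τ) ^ (1/(p+1))) ^ (1 - p)) / (1 - p))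
      (𝓝[>] 0) (𝓝 0) := by
  have hc : 0 < p + 1 := by linarith
  have hcont : ContinuousAt
      (fun τ : ℝ => 2 * ((((p+1) * τ) ^ (1/(p+1))) ^ (1 - p)) / (1 - p)) 0 :=
    ((((continuousAt_const.mul continuousAt_id).rpow_const (Or.inr (by positivity))).rpow_const
      (Or.inr (by linarith))).const_mul 2).div_const _
  have hlim := hcont.tendsto.mono_left (nhdsWithin_le_nhds (s := Ioi 0))
  rwa [mul_zero, zero_rpow (one_div_pos.2 hc).ne', zero_rpow (sub_pos.2 hp1).ne', mul_zero,
    zero_div] at hlim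

theorem stmt13 (p : ℝ) (hp0 : 0 < p) (hp1 : p < 1) :
    (∀ τ : ℝ, 0 < τ →
      HasDerivAt (fun σ : ℝ => 2 * ((((p+1) * σ) ^ (1/(p+1))) ^ (1 - p)) / (1 - p))
        (2 * ((p+1) * τ) ^ (-(2*p/(p+1)))) τ) ∧
    Filter.Tendsto (fun τ : ℝ => 2 * ((p+1) * τ) ^ (-(2*p/(p+1))))
      (nhdsWithin 0 (Set.Ioi 0)) Filter.atTop ∧
    Filter.Tendsto (fun τ : ℝ => 2 * ((((p+1) * τ) ^ (1/(p+1))) ^ (1 - p)) / (1 - p))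
      (nhdsWithin 0 (Set.Ioi 0)) (nhds 0) ∧
    ∀ v : ℝ, ¬ ∃ F : ℝ → ℝ, ContDiffOn ℝ 1 F (Set.Ici 0) ∧
      ∀ τ : ℝ, 0 < τ →
        F τ = -v + 2 * ((((p+1) * τ) ^ (1/(p+1))) ^ (1 - p)) / (1 - p) := by
  have hp : -1 < p := by linarith
  have hderiv τ (hτ : 0 < τ) := hasDerivAt_identification_shift hp hp1.ne hτ
  have hblowup : Tendsto (fun τ : ℝ => 2 * ((p+1) * τ) ^ (-(2*p/(p+1)))) (𝓝[>] 0) atTop :=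
    (tendsto_const_mul_rpow_nhdsGT_zero_atTop (by linarith)
      (neg_neg_of_pos (by positivity))).const_mul_atTop two_pos
  refine ⟨hderiv, hblowup, tendsto_identification_shift_nhdsGT_zero hp hp1, ?_⟩
  rintro v ⟨F, hF, hFeq⟩
  refine not_contDiffOn_Ici_of_tendsto_deriv_atTop (fun τ hτ => ?_) hblowup hF
  refine ((hderiv τ hτ).const_add (-v)).congr_of_eventuallyEq ?_
  filter_upwards [Ioi_mem_nhds hτ] with σ hσ using hFeq σ hσ
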